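/- QCMI of multi-qubit W states: Let n ≥ 4 and let Ψ_n = |W_n⟩⟨W_n| be the n-qubit W state with |W_n⟩ = n^{−1/2} Σ_{i=1}^{n} |e_i⟩, where |e_i⟩ denotes the computational basis state with a 1 in position i and 0 elsewhere. Take A, B, C to be the first, second, and third qubits respectively and D the remaining n−3 qubits. Then I(A;C|B)_{Ψ_n} = 2·h₂(2/n) − h₂(1/n) − h₂(3/n). In particular I(A;C|B)_{Ψ_n} > 0 for every finite n ≥ 4. -/

import Mathlib

/-
Every marginal of `|W_n⟩` on `k ≤ 3` qubits is the mixture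
`(1 - k/n)|0…0⟩⟨0…0| + (k/n)|W_k⟩⟨W_k|` of two orthonormal pure states, whose entropy is
`h₂(k/n)`: writing it as `V D Vᴴ` with `Vᴴ V = 1`, its characteristic polynomial is that of the
diagonal `D` up to a power of `X`. Hence `I(A;C|B) = S(AB) + S(BC) - S(B) - S(ABC)` equals
`2 h₂(2/n) - h₂(1/n) - h₂(3/n)`, which is positive by strict concavity of `h₂`, since `2/n` is
the midpoint of `1/n` and `3/n`.
-/

open scoped ComplexOrder

/-- A density operator (quantum state): positive semidefinite with unit trace. -/
def IsDensity {d : Type*} [Fintype d] (ρ : Matrix d d ℂ) : Prop :=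
  ρ.PosSemidef ∧ ρ.trace = 1

/-- Von Neumann entropy `S(ρ) = −tr(ρ log₂ ρ)`, computed via eigenvalues
(with the convention `0 · log₂ 0 = 0`); junk value `0` on non-Hermitian input. -/
noncomputable def vnEntropy {d : Type*} [Fintype d] [DecidableEq d]
    (ρ : Matrix d d ℂ) : ℝ := by
  classical exact
    if h : ρ.IsHermitian then -∑ i, (h.eigenvalues i) * Real.logb 2 (h.eigenvalues i) else 0

/-- Quantum conditional mutual information `I(x;z|y)_ρ = S(xy) + S(yz) − S(y) − S(xyz)`
for a state on `x ⊗ y ⊗ z` (conditioning on the middle system `y`). -/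
noncomputable def qcmi {x y z : Type*} [Fintype x] [Fintype y] [Fintype z]
    [DecidableEq x] [DecidableEq y] [DecidableEq z]
    (ρ : Matrix (x × y × z) (x × y × z) ℂ) : ℝ :=
  vnEntropy (Matrix.of fun (p q : x × y) => ∑ c, ρ (p.1, p.2, c) (q.1, q.2, c))
  + vnEntropy (Matrix.of fun (p q : y × z) => ∑ a, ρ (a, p.1, p.2) (a, q.1, q.2))
  - vnEntropy (Matrix.of fun (b b' : y) => ∑ a, ∑ c, ρ (a, b, c) (a, b', c))
  - vnEntropy ρ

/-- For a state `σ` on `A ⊗ B ⊗ C ⊗ D ⊗ E`, the conditional mutual information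
`I(A;C|BE)_σ`: the spectator `D` is traced out and `BE` is the conditioning system. -/
noncomputable def qcmiACgivenBE {dA dB dC dD dE : Type*}
    [Fintype dA] [Fintype dB] [Fintype dC] [Fintype dD] [Fintype dE]
    [DecidableEq dA] [DecidableEq dB] [DecidableEq dC] [DecidableEq dE]
    (σ : Matrix ((dA × dB × dC × dD) × dE) ((dA × dB × dC × dD) × dE) ℂ) : ℝ :=
  qcmi (Matrix.of fun (p q : dA × (dB × dE) × dC) =>
    ∑ d : dD, σ ((p.1, p.2.1.1, p.2.2, d), p.2.1.2) ((q.1, q.2.1.1, q.2.2, d), q.2.1.2))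

/-- Hysteretic squashed entanglement `T_sq(A;C|B)_ρ` of a state on `A ⊗ B ⊗ C ⊗ D`:
half the infimum of `I(A;C|BE)_σ` over all state extensions `σ_ABCDE` of `ρ_ABCD`,
over all finite-dimensional extension systems `E`. -/
noncomputable def Tsq {dA dB dC dD : Type*}
    [Fintype dA] [Fintype dB] [Fintype dC] [Fintype dD]
    [DecidableEq dA] [DecidableEq dB] [DecidableEq dC] [DecidableEq dD]
    (ρ : Matrix (dA × dB × dC × dD) (dA × dB × dC × dD) ℂ) : ℝ :=
  sInf { t : ℝ | ∃ (nE : ℕ)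
    (σ : Matrix ((dA × dB × dC × dD) × Fin nE) ((dA × dB × dC × dD) × Fin nE) ℂ),
    IsDensity σ ∧ (Matrix.of fun p q => ∑ e, σ (p, e) (q, e)) = ρ ∧
    t = (1/2) * qcmiACgivenBE σ }

/-- For a state `σ` on `A ⊗ B ⊗ C ⊗ E`, the conditional mutual information
`I(A;C|BE)_σ` with conditioning system `BE`. -/
noncomputable def qcmi3 {dA dB dC dE : Type*}
    [Fintype dA] [Fintype dB] [Fintype dC] [Fintype dE]
    [DecidableEq dA] [DecidableEq dB] [DecidableEq dC] [DecidableEq dE]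
    (σ : Matrix ((dA × dB × dC) × dE) ((dA × dB × dC) × dE) ℂ) : ℝ :=
  qcmi (Matrix.of fun (p q : dA × (dB × dE) × dC) =>
    σ ((p.1, p.2.1.1, p.2.2), p.2.1.2) ((q.1, q.2.1.1, q.2.2), q.2.1.2))

/-- Squashed quantum non-Markovianity `N_sq(A;C|B)_ρ` of a state on `A ⊗ B ⊗ C`:
half the infimum of `I(A;C|BE)_σ` over all state extensions `σ_ABCE` of `ρ_ABC`. -/
noncomputable def Nsq {dA dB dC : Type*}
    [Fintype dA] [Fintype dB] [Fintype dC]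
    [DecidableEq dA] [DecidableEq dB] [DecidableEq dC]
    (ρ : Matrix (dA × dB × dC) (dA × dB × dC) ℂ) : ℝ :=
  sInf { t : ℝ | ∃ (nE : ℕ)
    (σ : Matrix ((dA × dB × dC) × Fin nE) ((dA × dB × dC) × Fin nE) ℂ),
    IsDensity σ ∧ (Matrix.of fun p q => ∑ e, σ (p, e) (q, e)) = ρ ∧
    t = (1/2) * qcmi3 σ }

/-- Choi matrix of a linear map on matrices. -/
noncomputable def choiMatrix {dX dY : Type*} [Fintype dX] [DecidableEq dX] [Fintype dY]
    (Φ : Matrix dX dX ℂ →ₗ[ℂ] Matrix dY dY ℂ) : Matrix (dX × dY) (dX × dY) ℂ :=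
  Matrix.of fun p q => Φ (Matrix.single p.1 q.1 1) p.2 q.2

/-- A quantum channel: completely positive (equivalently, PSD Choi matrix, by Choi's
theorem) and trace-preserving linear map. -/
def IsQuantumChannel {dX dY : Type*} [Fintype dX] [DecidableEq dX] [Fintype dY]
    (Φ : Matrix dX dX ℂ →ₗ[ℂ] Matrix dY dY ℂ) : Prop :=
  (choiMatrix Φ).PosSemidef ∧ ∀ ρ : Matrix dX dX ℂ, (Φ ρ).trace = ρ.trace

/-- `(Φ ⊗ id)` applied to an operator on `X ⊗ R`. -/
noncomputable def applyLeft {dX dY dR : Type*} [Fintype dX] [DecidableEq dX]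
    (Φ : Matrix dX dX ℂ →ₗ[ℂ] Matrix dY dY ℂ)
    (ρ : Matrix (dX × dR) (dX × dR) ℂ) : Matrix (dY × dR) (dY × dR) ℂ :=
  Matrix.of fun p q => ∑ a, ∑ a',
    Φ (Matrix.single a a' 1) p.1 q.1 * ρ (a, p.2) (a', q.2)

/-- `(id ⊗ Φ)` applied to an operator on `R ⊗ X`. -/
noncomputable def applyRight {dX dY dR : Type*} [Fintype dX] [DecidableEq dX]
    (Φ : Matrix dX dX ℂ →ₗ[ℂ] Matrix dY dY ℂ)
    (ρ : Matrix (dR × dX) (dR × dX) ℂ) : Matrix (dR × dY) (dR × dY) ℂ :=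
  Matrix.of fun p q => ∑ x, ∑ x',
    Φ (Matrix.single x x' 1) p.2 q.2 * ρ (p.1, x) (q.1, x')

/-- The positive semidefinite square root of a positive semidefinite matrix
(the Mathlib definition of December 2024, since removed from Mathlib). -/
noncomputable def Matrix.PosSemidef.sqrt {n 𝕜 : Type*} [Fintype n] [RCLike 𝕜] [DecidableEq n]
    {A : Matrix n n 𝕜} (hA : A.PosSemidef) : Matrix n n 𝕜 :=
  hA.1.eigenvectorUnitary.1 * Matrix.diagonal ((↑) ∘ (Real.sqrt ∘ hA.1.eigenvalues)) *
  (star hA.1.eigenvectorUnitary : Matrix n n 𝕜)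

/-- Trace norm `‖X‖₁ = tr √(XᴴX)`. -/
noncomputable def traceNorm {d : Type*} [Fintype d] [DecidableEq d]
    (X : Matrix d d ℂ) : ℝ :=
  ((Matrix.posSemidef_conjTranspose_mul_self X).sqrt.trace).re

/-- Fidelity `F(ρ,σ) = (tr|√ρ √σ|)²` (junk value `0` off the PSD cone). -/
noncomputable def fidelity {d : Type*} [Fintype d] [DecidableEq d]
    (ρ σ : Matrix d d ℂ) : ℝ := by
  classical exact
    if h : ρ.PosSemidef ∧ σ.PosSemidef then (traceNorm (h.1.sqrt * h.2.sqrt)) ^ 2 else 0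

/-- Binary entropy (base 2), with `h₂(0) = h₂(1) = 0`. -/
noncomputable def binEnt (p : ℝ) : ℝ :=
  -(p * Real.logb 2 p) - (1 - p) * Real.logb 2 (1 - p)

/-- ABC-marginal of the pure state `|v⟩⟨v|` on `A ⊗ B ⊗ C ⊗ D`. -/
noncomputable def pureMargABC {dA dB dC dD : Type*}
    [Fintype dA] [Fintype dB] [Fintype dC] [Fintype dD]
    (v : (dA × dB × dC × dD) → ℂ) : Matrix (dA × dB × dC) (dA × dB × dC) ℂ :=
  Matrix.of fun p q =>
    ∑ d, v (p.1, p.2.1, p.2.2, d) * (starRingEnd ℂ) (v (q.1, q.2.1, q.2.2, d))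

/-- Convex-roof extension of QCMI: `co(QCMI)[ρ_ABCD]` is half the infimum of
`Σ_i p_i I(A;C|B)_{ψ^i}` over finite pure-state ensembles `{p_i, ψ^i}` for `ρ`. -/
noncomputable def coQCMI {dA dB dC dD : Type*}
    [Fintype dA] [Fintype dB] [Fintype dC] [Fintype dD]
    [DecidableEq dA] [DecidableEq dB] [DecidableEq dC] [DecidableEq dD]
    (ρ : Matrix (dA × dB × dC × dD) (dA × dB × dC × dD) ℂ) : ℝ :=
  sInf { t : ℝ | ∃ (k : ℕ) (p : Fin k → ℝ) (v : Fin k → (dA × dB × dC × dD) → ℂ),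
    (∀ i, 0 ≤ p i) ∧ (∑ i, p i) = 1 ∧
    (∀ i, ∑ a, v i a * (starRingEnd ℂ) (v i a) = 1) ∧
    ρ = ∑ i, (p i : ℂ) • Matrix.of (fun a b => v i a * (starRingEnd ℂ) (v i b)) ∧
    t = (1/2) * ∑ i, p i * qcmi (pureMargABC (v i)) }

open Classical in
/-- The `n`-qubit W state vector `n^{-1/2} Σ_i |e_i⟩`, with the first three qubits
labelled `A`, `B`, `C` and the remaining `n − 3` qubits labelled `D`; the amplitude
is `n^{-1/2}` exactly on computational basis states of Hamming weight one. -/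
noncomputable def wVec (n : ℕ) :
    (Fin 2 × Fin 2 × Fin 2 × (Fin (n - 3) → Fin 2)) → ℂ := fun p =>
  if (if p.1 = 1 then 1 else 0) + (if p.2.1 = 1 then 1 else 0)
      + (if p.2.2.1 = 1 then 1 else 0)
      + (Finset.univ.filter fun i => p.2.2.2 i = 1).card = 1 then
    ((Real.sqrt n : ℝ) : ℂ)⁻¹
  else 0

open Polynomial Matrix
open scoped Finset

section Entropy

variable {ι κ : Type*} [Fintype ι] [DecidableEq ι] [Fintype κ]

theorem vnEntropy_eq_of_X_pow_mul_charpoly_eq {A : Matrix ι ι ℂ} (hA : A.IsHermitian)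
    {a b : ℕ} (p : κ → ℝ) (h : X ^ a * A.charpoly = X ^ b * ∏ k, (X - C (p k : ℂ))) :
    vnEntropy A = -∑ k, p k * Real.logb 2 (p k) := by
  let η : ℂ → ℝ := fun z => z.re * Real.logb 2 z.re
  -- zero roots contribute `0 * logb 2 0 = 0`, so the powers of `X` do not affect the entropy
  have hprod : ∏ k, (X - C (p k : ℂ)) = ((Finset.univ.val.map fun k => (p k : ℂ)).map
      fun z => X - C z).prod := by
    rw [Multiset.map_map]; rfl
  have hroots := congrArg (fun P : ℂ[X] => (P.roots.map η).sum) h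
  rw [roots_mul (by simp [A.charpoly_monic.ne_zero]), roots_mul (by
    simp [Finset.prod_ne_zero_iff, X_sub_C_ne_zero]), roots_X_pow, roots_X_pow,
    hA.roots_charpoly_eq_eigenvalues, hprod, roots_multiset_prod_X_sub_C] at hroots
  simp only [Multiset.map_add, Multiset.sum_add, Multiset.map_nsmul, Multiset.sum_nsmul,
    Multiset.map_singleton, Multiset.sum_singleton, Multiset.map_map] at hroots
  rw [vnEntropy, dif_pos hA]
  simp only [η, Complex.zero_re, zero_mul, smul_zero, zero_add] at hroots
  rw [Finset.sum_eq_multiset_sum, Finset.sum_eq_multiset_sum]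
  exact congrArg Neg.neg hroots

theorem vnEntropy_mul_diagonal_mul_conjTranspose [DecidableEq κ] {V : Matrix ι κ ℂ}
    (hV : Vᴴ * V = 1) (p : κ → ℝ) :
    vnEntropy (V * diagonal (fun k => (p k : ℂ)) * Vᴴ) = -∑ k, p k * Real.logb 2 (p k) := by
  have hD : (diagonal fun k => (p k : ℂ)).IsHermitian :=
    isHermitian_diagonal_of_self_adjoint _ (funext fun k => Complex.conj_ofReal (p k))
  refine vnEntropy_eq_of_X_pow_mul_charpoly_eq (isHermitian_mul_mul_conjTranspose V hD)
    (a := Fintype.card κ) (b := Fintype.card ι) p ?_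
  rw [Matrix.mul_assoc, charpoly_mul_comm', Matrix.mul_assoc, hV, Matrix.mul_one,
    charpoly_diagonal]

end Entropy

theorem ofReal_inv_sqrt_mul_self {c : ℝ} (hc : 0 ≤ c) :
    ((√c : ℝ) : ℂ)⁻¹ * ((√c : ℝ) : ℂ)⁻¹ = (c : ℂ)⁻¹ := by
  rw [← mul_inv, ← Complex.ofReal_mul, Real.mul_self_sqrt hc]

section VacuumW

variable {ι : Type*} [DecidableEq ι] (z : ι) (S : Finset ι)

/-- `(1 - p)|z⟩⟨z| + p|W_S⟩⟨W_S|`, where `|W_S⟩` is the uniform superposition of the basis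
states in `S`. -/
noncomputable def vacuumWMixture (p : ℝ) : Matrix ι ι ℂ :=
  of fun x y => if x = z ∧ y = z then ((1 - p : ℝ) : ℂ)
    else if x ∈ S ∧ y ∈ S then ((p / S.card : ℝ) : ℂ) else 0

noncomputable def vacuumWIsometry : Matrix ι (Fin 2) ℂ :=
  of fun x => ![if x = z then 1 else 0, if x ∈ S then ((√S.card : ℝ) : ℂ)⁻¹ else 0]

variable {z S}

theorem conjTranspose_vacuumWIsometry_mul_self [Fintype ι] (hz : z ∉ S) (hS : S.Nonempty) :
    (vacuumWIsometry z S)ᴴ * vacuumWIsometry z S = 1 := by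
  ext k l
  fin_cases k <;> fin_cases l <;>
    simp [vacuumWIsometry, mul_apply, hz, apply_ite (starRingEnd ℂ), Finset.sum_ite_mem]
  rw [ofReal_inv_sqrt_mul_self (Nat.cast_nonneg _), Complex.ofReal_natCast]
  exact mul_inv_cancel₀ (by exact_mod_cast hS.card_ne_zero)

theorem vacuumWMixture_eq (hz : z ∉ S) (p : ℝ) :
    vacuumWMixture z S p = vacuumWIsometry z S * diagonal (fun k => ((![1 - p, p] k : ℝ) : ℂ))
      * (vacuumWIsometry z S)ᴴ := by
  ext x y
  simp [vacuumWMixture, vacuumWIsometry, mul_apply, Fin.sum_univ_two, apply_ite (starRingEnd ℂ)]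
  have hsq := ofReal_inv_sqrt_mul_self (Nat.cast_nonneg (α := ℝ) S.card)
  push_cast at hsq
  split_ifs <;> simp_all
  linear_combination -(p : ℂ) * hsq

theorem vnEntropy_vacuumWMixture [Fintype ι] (hz : z ∉ S) (hS : S.Nonempty) (p : ℝ) :
    vnEntropy (vacuumWMixture z S p) = binEnt p := by
  rw [vacuumWMixture_eq hz, vnEntropy_mul_diagonal_mul_conjTranspose
    (conjTranspose_vacuumWIsometry_mul_self hz hS), Fin.sum_univ_two, binEnt]
  simp only [Matrix.cons_val_zero, Matrix.cons_val_one]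
  ring

end VacuumW

abbrev Qubit3 := Fin 2 × Fin 2 × Fin 2

noncomputable def threeQubitW (p : ℝ) : Matrix Qubit3 Qubit3 ℂ :=
  vacuumWMixture (0, 0, 0) {(1, 0, 0), (0, 1, 0), (0, 0, 1)} p

theorem traceRight_threeQubitW (p : ℝ) :
    (of fun (x y : Fin 2 × Fin 2) => ∑ c, threeQubitW p (x.1, x.2, c) (y.1, y.2, c))
      = vacuumWMixture (0, 0) {(1, 0), (0, 1)} (2 * p / 3) := by
  ext x y
  fin_cases x <;> fin_cases y <;> simp [threeQubitW, vacuumWMixture, Fin.sum_univ_two]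
  all_goals ring

theorem traceLeft_threeQubitW (p : ℝ) :
    (of fun (x y : Fin 2 × Fin 2) => ∑ a, threeQubitW p (a, x.1, x.2) (a, y.1, y.2))
      = vacuumWMixture (0, 0) {(1, 0), (0, 1)} (2 * p / 3) := by
  ext x y
  fin_cases x <;> fin_cases y <;> simp [threeQubitW, vacuumWMixture, Fin.sum_univ_two]
  all_goals ring

theorem traceOuter_threeQubitW (p : ℝ) :
    (of fun (b b' : Fin 2) => ∑ a, ∑ c, threeQubitW p (a, b, c) (a, b', c))
      = vacuumWMixture 0 {1} (p / 3) := by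
  ext b b'
  fin_cases b <;> fin_cases b' <;> simp [threeQubitW, vacuumWMixture, Fin.sum_univ_two]
  ring

theorem qcmi_threeQubitW (p : ℝ) :
    qcmi (threeQubitW p) = 2 * binEnt (2 * p / 3) - binEnt (p / 3) - binEnt p := by
  rw [qcmi, traceRight_threeQubitW, traceLeft_threeQubitW, traceOuter_threeQubitW, threeQubitW,
    vnEntropy_vacuumWMixture (by decide) (by decide),
    vnEntropy_vacuumWMixture (by decide) (by decide),
    vnEntropy_vacuumWMixture (by decide) (by decide)]
  ring

theorem card_fun_fin_two_filter_card_eq (α : Type*) [Fintype α] [DecidableEq α] (k : ℕ) :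
    #{f : α → Fin 2 | #{i | f i = 1} = k} = (Fintype.card α).choose k := by
  rw [← Finset.card_univ, ← Finset.card_powersetCard]
  refine Finset.card_nbij' (fun f => ({i | f i = 1} : Finset α))
    (fun s i => if i ∈ s then 1 else 0) ?_ ?_ ?_ ?_
  · intro f hf
    simpa using hf
  · intro s hs
    simp_all
  · intro f _
    funext i
    rcases Fin.exists_fin_two.mp ⟨f i, rfl⟩ with hfi | hfi <;> simp [hfi]
  · intro s _
    ext i
    simp

theorem card_fun_fin_two_filter_add_card_eq_one (α : Type*) [Fintype α] [DecidableEq α]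
    (a b : ℕ) :
    #{f : α → Fin 2 | a + #{i | f i = 1} = 1 ∧ b + #{i | f i = 1} = 1}
      = if a = 0 ∧ b = 0 then Fintype.card α else if a = 1 ∧ b = 1 then 1 else 0 := by
  split_ifs with h0 h1
  · obtain ⟨rfl, rfl⟩ := h0
    simpa using card_fun_fin_two_filter_card_eq α 1
  · obtain ⟨rfl, rfl⟩ := h1
    simpa using card_fun_fin_two_filter_card_eq α 0
  · rw [Finset.card_eq_zero, Finset.filter_eq_empty_iff]
    intro f _
    omega

def wt3 (x : Qubit3) : ℕ :=
  (if x.1 = 1 then 1 else 0) + (if x.2.1 = 1 then 1 else 0) + (if x.2.2 = 1 then 1 else 0)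

theorem wVec_marginal_eq_threeQubitW (n : ℕ) (hn : 3 ≤ n) :
    (of fun (x y : Qubit3) => ∑ f : Fin (n - 3) → Fin 2,
        wVec n (x.1, x.2.1, x.2.2, f) * (starRingEnd ℂ) (wVec n (y.1, y.2.1, y.2.2, f)))
      = threeQubitW (3 / n) := by
  have hwVec : ∀ x f, wVec n (x.1, x.2.1, x.2.2, f)
      = if wt3 x + #{i | f i = 1} = 1 then ((√n : ℝ) : ℂ)⁻¹ else 0 := fun _ _ => rfl
  ext x y
  simp only [of_apply, hwVec, apply_ite (starRingEnd ℂ), map_zero, map_inv₀,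
    Complex.conj_ofReal, ite_mul, mul_ite, zero_mul, mul_zero,
    ofReal_inv_sqrt_mul_self (Nat.cast_nonneg n), ← ite_and]
  have hvac : ∀ x : Qubit3, x = (0, 0, 0) ↔ wt3 x = 0 := by decide
  have hW : ∀ x : Qubit3,
      x ∈ ({(1, 0, 0), (0, 1, 0), (0, 0, 1)} : Finset Qubit3) ↔ wt3 x = 1 := by
    decide
  rw [← Finset.sum_filter, Finset.sum_const, card_fun_fin_two_filter_add_card_eq_one, threeQubitW,
    vacuumWMixture, of_apply]
  simp only [hvac, hW, and_comm (a := wt3 x = _)]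
  split_ifs
  · push_cast [Fintype.card_fin, nsmul_eq_mul, Nat.cast_sub hn]
    field_simp
  · simp [Finset.card_insert_of_notMem]
    ring
  · simp

theorem binEnt_eq_binEntropy_div_log_two (p : ℝ) :
    binEnt p = Real.binEntropy p / Real.log 2 := by
  simp only [binEnt, Real.binEntropy, Real.log_inv, Real.logb]
  ring

theorem binEnt_add_binEnt_lt_two_mul_binEnt_midpoint {x y : ℝ} (hx : x ∈ Set.Icc 0 1)
    (hy : y ∈ Set.Icc 0 1) (hxy : x ≠ y) :
    binEnt x + binEnt y < 2 * binEnt ((x + y) / 2) := by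
  have hconcave := Real.strictConcave_binEntropy.2 hx hy hxy (by norm_num : (0 : ℝ) < 1 / 2)
    (by norm_num : (0 : ℝ) < 1 / 2) (by norm_num)
  rw [smul_eq_mul, smul_eq_mul, smul_eq_mul, smul_eq_mul,
    show (1 / 2 : ℝ) * x + 1 / 2 * y = (x + y) / 2 by ring] at hconcave
  simp only [binEnt_eq_binEntropy_div_log_two]
  rw [← add_div, ← mul_div_assoc]
  exact div_lt_div_of_pos_right (by linarith) (Real.log_pos one_lt_two)

/-- **QCMI of multi-qubit W states:** for `n ≥ 4`, with `A`, `B`, `C` the first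
three qubits and `D` the remaining `n − 3` qubits,
`I(A;C|B)_{Ψ_n} = 2 h₂(2/n) − h₂(1/n) − h₂(3/n) > 0`. -/
theorem w_state_qcmi (n : ℕ) (hn : 4 ≤ n) :
    qcmi (Matrix.of fun (p q : Fin 2 × Fin 2 × Fin 2) =>
        ∑ f : Fin (n - 3) → Fin 2,
          wVec n (p.1, p.2.1, p.2.2, f) * (starRingEnd ℂ) (wVec n (q.1, q.2.1, q.2.2, f)))
      = 2 * binEnt (2 / n) - binEnt (1 / n) - binEnt (3 / n)
    ∧ 0 < qcmi (Matrix.of fun (p q : Fin 2 × Fin 2 × Fin 2) =>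
        ∑ f : Fin (n - 3) → Fin 2,
          wVec n (p.1, p.2.1, p.2.2, f) * (starRingEnd ℂ) (wVec n (q.1, q.2.1, q.2.2, f))) := by
  have hn0 : (0 : ℝ) < n := by positivity
  have hn4 : (4 : ℝ) ≤ n := by exact_mod_cast hn
  rw [wVec_marginal_eq_threeQubitW n (by omega), qcmi_threeQubitW,
    show 2 * (3 / (n : ℝ)) / 3 = 2 / n by ring, show 3 / (n : ℝ) / 3 = 1 / n by ring]
  refine ⟨rfl, ?_⟩
  have hlt := binEnt_add_binEnt_lt_two_mul_binEnt_midpoint (x := 1 / n) (y := 3 / n)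
    ⟨by positivity, by rw [div_le_one hn0]; linarith⟩
    ⟨by positivity, by rw [div_le_one hn0]; linarith⟩
    (by rw [Ne, div_left_inj' hn0.ne']; norm_num)
  rw [show (1 / (n : ℝ) + 3 / n) / 2 = 2 / n by ring] at hlt
  linarith
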